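/- Let n ≥ 2, let A be an invertible n×n real matrix, b, c ∈ ℝⁿ with c₁ ≠ 0 and ρᵀ c ≠ 0, where ρᵀ = e₁ᵀ adj(A), and let μ ∈ ℝ. Suppose x ∈ ℝⁿ satisfies x₁ = 0 and Ax + bμ − (e₁ᵀ(Ax + bμ)/c₁) c = 0 (i.e., x is a pseudo-equilibrium of the piecewise-linear system on the discontinuity surface). Then e₁ᵀ(Ax + bμ) = (ρᵀ b) c₁ μ / (ρᵀ c). -/

import Mathlib

/-!
At a pseudo-equilibrium the left vector field is parallel to `c`: `Ax + μb = λc` with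
`λ = F₁ᴸ / c₁`. Applying `adj A` gives `det A • x + μ • adj A b = λ • adj A c`, whose first
component, since `x₁ = 0`, reads `μ ρᵀb = λ ρᵀc`. Solving for `λ` and using `F₁ᴸ = λ c₁` gives
the formula.
-/

open Matrix

namespace Matrix

variable {ι R : Type*} [Fintype ι] [DecidableEq ι] [CommRing R]

theorem adjugate_mulVec_mulVec (A : Matrix ι ι R) (x : ι → R) :
    A.adjugate *ᵥ (A *ᵥ x) = A.det • x := by
  rw [mulVec_mulVec, adjugate_mul, smul_mulVec, one_mulVec]

theorem mul_adjugate_mulVec_apply_eq_of_mulVec_add_smul_eq_smul (A : Matrix ι ι R)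
    {b c x : ι → R} {μ t : R} {i : ι} (hx : A *ᵥ x + μ • b = t • c) (hxi : x i = 0) :
    μ * (A.adjugate *ᵥ b) i = t * (A.adjugate *ᵥ c) i := by
  have h := congrFun (congrArg (A.adjugate *ᵥ ·) hx) i
  simpa only [mulVec_add, mulVec_smul, adjugate_mulVec_mulVec, Pi.add_apply, Pi.smul_apply,
    smul_eq_mul, hxi, mul_zero, zero_add] using h

end Matrix

theorem firstComponent_at_pseudoEquilibrium (n : ℕ)
    (A : Matrix (Fin (n + 2)) (Fin (n + 2)) ℝ) (b c : Fin (n + 2) → ℝ)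
    (hc : c 0 ≠ 0)
    (hrc : (A.adjugate.mulVec c) 0 ≠ 0) (μ : ℝ) (x : Fin (n + 2) → ℝ)
    (hx1 : x 0 = 0)
    (hx : A.mulVec x + μ • b - (((A.mulVec x + μ • b) 0) / c 0) • c = 0) :
    (A.mulVec x + μ • b) 0
      = (A.adjugate.mulVec b) 0 * c 0 * μ / (A.adjugate.mulVec c) 0 := by
  set F := A *ᵥ x + μ • b
  set t := F 0 / c 0
  have hF : F = t • c := sub_eq_zero.mp hx
  have hcramer : μ * (A.adjugate *ᵥ b) 0 = t * (A.adjugate *ᵥ c) 0 :=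
    A.mul_adjugate_mulVec_apply_eq_of_mulVec_add_smul_eq_smul hF hx1
  have hF0 : F 0 = t * c 0 := (div_mul_cancel₀ _ hc).symm
  rw [hF0, eq_div_iff hrc]
  linear_combination c 0 * hcramer.symm
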